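/- Let $R$ be a commutative ring, $m \geq 1$, and $q_1, \ldots, q_{2m} \in R$ units. Let $V = R^2$ and, on $V^{\otimes 2m}$ with cyclic index convention (position $2m+1$ := position $1$), let $R_i$ ($1 \le i \le 2m$) act on basis element $v_{\alpha_1} \otimes \cdots \otimes v_{\alpha_{2m}}$ by $R_i \circ \alpha = \delta'(\alpha_i, \alpha_{i+1}) \big( q_i^{2-\alpha_i} \alpha^{(i \mapsto 1,\, i+1 \mapsto 2)} + q_i^{1-\alpha_i} \alpha^{(i \mapsto 2,\, i+1 \mapsto 1)} \big)$, where $\alpha^{(\ldots)}$ denotes the basis vector with the indicated entries replaced and $\delta'(a,b) = 1 - \delta(a,b)$. Set $\mathcal{O} = R_1 R_3 \cdots R_{2m-1}$, $\mathcal{E} = R_2 R_4 \cdots R_{2m}$, and $Q = \frac{q_1 q_3 \cdots q_{2m-1}}{q_2 q_4 \cdots q_{2m}} + 2 + \frac{q_2 q_4 \cdots q_{2m}}{q_1 q_3 \cdots q_{2m-1}}$. Then $\mathcal{O}\mathcal{E}\mathcal{O} = Q\, \mathcal{O}$ and $\mathcal{E}\mathcal{O}\mathcal{E} = Q\, \mathcal{E}$.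 -/

import Mathlib

/-- The cup-cap matrix `M_q` on `R² ⊗ R²`, indexed by pairs `(i,j)` with `i,j : Fin 2`
(`0` corresponds to `v₁`, `1` to `v₂`). Its only nonzero entries are
`M[(1,2),(1,2)] = q`, `M[(1,2),(2,1)] = 1`, `M[(2,1),(1,2)] = 1`, `M[(2,1),(2,1)] = q⁻¹`. -/
def cupcap {R : Type*} [CommRing R] (q : Rˣ) :
    Matrix (Fin 2 × Fin 2) (Fin 2 × Fin 2) R :=
  Matrix.of fun p p' =>
    if p = (0, 1) ∧ p' = (0, 1) then (q : R)
    else if p = (0, 1) ∧ p' = (1, 0) then 1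
    else if p = (1, 0) ∧ p' = (0, 1) then 1
    else if p = (1, 0) ∧ p' = (1, 0) then ((q⁻¹ : Rˣ) : R)
    else 0

/-- The operator on `V^{⊗ m}` (`V = R²`) acting as the cup-cap matrix `M_q` on the
tensor factors `i`, `j` and as the identity elsewhere, written as a matrix indexed
by basis sequences `Fin m → Fin 2`. -/
def cupcapOp {R : Type*} [CommRing R] {m : ℕ} (q : Rˣ) (i j : Fin m) :
    Matrix (Fin m → Fin 2) (Fin m → Fin 2) R :=
  Matrix.of fun β α =>
    (if ∀ k, k ≠ i → k ≠ j → β k = α k then (1 : R) else 0) *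
      cupcap q (β i, β j) (α i, α j)

/-- Cyclic cup-cap operator on `V^{⊗n}`: acts on tensor factors `i mod n` and
`(i+1) mod n`. -/
def cupcapCyc {R : Type*} [CommRing R] {n : ℕ} (hn : 0 < n) (q : Rˣ) (i : ℕ) :
    Matrix (Fin n → Fin 2) (Fin n → Fin 2) R :=
  cupcapOp q ⟨i % n, Nat.mod_lt _ hn⟩ ⟨(i + 1) % n, Nat.mod_lt _ hn⟩

/-- `𝒪 = R₁R₃⋯R_{2m-1}` (0-indexed: positions 0,2,…,2m-2), the product of the cyclic
cup-cap operators at odd positions, with parameter `q i` at position `i`. -/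
def oddProd {R : Type*} [CommRing R] (m : ℕ) (hm : 0 < m) (q : ℕ → Rˣ) :
    Matrix (Fin (2 * m) → Fin 2) (Fin (2 * m) → Fin 2) R :=
  ((List.range m).map fun j => cupcapCyc (n := 2 * m) (by omega) (q (2 * j)) (2 * j)).prod

/-- `ℰ = R₂R₄⋯R_{2m}` (0-indexed: positions 1,3,…,2m-1), the product of the cyclic
cup-cap operators at even positions (the last one wrapping around). -/
def evenProd {R : Type*} [CommRing R] (m : ℕ) (hm : 0 < m) (q : ℕ → Rˣ) :
    Matrix (Fin (2 * m) → Fin 2) (Fin (2 * m) → Fin 2) R :=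
  ((List.range m).map fun j =>
    cupcapCyc (n := 2 * m) (by omega) (q (2 * j + 1)) (2 * j + 1)).prod

section Aux

variable {R : Type*} [CommRing R]

lemma mod_add_ne {n s t₁ t₂ : ℕ} (h1 : t₁ < n) (h2 : t₂ < n) (hne : t₁ ≠ t₂) :
    (s + t₁) % n ≠ (s + t₂) % n := by
  intro h
  have h' : t₁ ≡ t₂ [MOD n] := Nat.ModEq.add_left_cancel' s h
  rw [Nat.ModEq, Nat.mod_eq_of_lt h1, Nat.mod_eq_of_lt h2] at h'
  exact hne h'

set_option maxHeartbeats 1000000 in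
lemma prod_formula (m : ℕ) (hm : 1 ≤ m) (q : ℕ → Rˣ) (s : ℕ) (k : ℕ) (hk : k ≤ m) :
    ((List.range k).map fun j =>
        cupcapCyc (R := R) (n := 2 * m) (by omega) (q (s + 2 * j)) (s + 2 * j)).prod =
    Matrix.of fun β α =>
      (if ∀ i : Fin (2 * m), (∀ t, t < 2 * k → (i : ℕ) ≠ (s + t) % (2 * m)) → β i = α i
        then (1 : R) else 0) *
      ∏ j ∈ Finset.range k,
        cupcap (q (s + 2 * j))
          (β ⟨(s + 2 * j) % (2 * m), Nat.mod_lt _ (by omega)⟩,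
           β ⟨(s + 2 * j + 1) % (2 * m), Nat.mod_lt _ (by omega)⟩)
          (α ⟨(s + 2 * j) % (2 * m), Nat.mod_lt _ (by omega)⟩,
           α ⟨(s + 2 * j + 1) % (2 * m), Nat.mod_lt _ (by omega)⟩) := by
  induction k with
  | zero =>
    ext β α
    simp only [List.range_zero, List.map_nil, List.prod_nil, Matrix.of_apply,
      Finset.range_zero, Finset.prod_empty, mul_one, Matrix.one_apply]
    have hiff : (∀ i : Fin (2 * m), (∀ t, t < 2 * 0 → (i : ℕ) ≠ (s + t) % (2 * m)) → β i = α i)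
        ↔ β = α := by
      constructor
      · intro h; funext i; exact h i (fun t ht => absurd ht (by omega))
      · intro h i _; rw [h]
    exact if_congr hiff.symm rfl rfl
  | succ k ih =>
    have hk' : k ≤ m := by omega
    rw [List.range_succ, List.map_append, List.prod_append, List.map_singleton,
      List.prod_singleton, ih hk']
    ext β α
    rw [Matrix.mul_apply]
    obtain ⟨γ₀, hγdef⟩ : ∃ γ₀ : Fin (2 * m) → Fin 2, ∀ i : Fin (2 * m),
        γ₀ i = if ∀ t, t < 2 * k → ((i : ℕ) ≠ (s + t) % (2 * m)) then β i else α i :=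
      ⟨_, fun i => rfl⟩
    have hposF : ∀ i : Fin (2 * m), (∀ t, t < 2 * k → ((i : ℕ) ≠ (s + t) % (2 * m))) →
        γ₀ i = β i := fun i h => by rw [hγdef i, if_pos h]
    have hnegF : ∀ i : Fin (2 * m), ¬ (∀ t, t < 2 * k → ((i : ℕ) ≠ (s + t) % (2 * m))) →
        γ₀ i = α i := fun i h => by rw [hγdef i, if_neg h]
    have hγβ : ∀ (u : ℕ), (∀ t, t < 2 * k → u % (2 * m) ≠ (s + t) % (2 * m)) →
        ∀ (h : u % (2 * m) < 2 * m), γ₀ ⟨u % (2 * m), h⟩ = β ⟨u % (2 * m), h⟩ :=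
      fun u hu h => hposF ⟨u % (2 * m), h⟩ hu
    have hγα : ∀ (u : ℕ), ¬ (∀ t, t < 2 * k → u % (2 * m) ≠ (s + t) % (2 * m)) →
        ∀ (h : u % (2 * m) < 2 * m), γ₀ ⟨u % (2 * m), h⟩ = α ⟨u % (2 * m), h⟩ :=
      fun u hu h => hnegF ⟨u % (2 * m), h⟩ hu
    have hUa : ∀ t, t < 2 * k → ((s + 2 * k) % (2 * m) ≠ (s + t) % (2 * m)) :=
      fun t ht => mod_add_ne (by omega) (by omega) (by omega)
    have hUb : ∀ t, t < 2 * k → ((s + 2 * k + 1) % (2 * m) ≠ (s + t) % (2 * m)) :=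
      fun t ht => mod_add_ne (t₁ := 2 * k + 1) (by omega) (by omega) (by omega)
    refine (Finset.sum_eq_single_of_mem γ₀ (Finset.mem_univ _) ?_).trans ?_
    · -- other γ give zero
      intro γ _ hne
      obtain ⟨i, hi⟩ := Function.ne_iff.mp hne
      simp only [Matrix.of_apply, cupcapCyc, cupcapOp]
      by_cases hU : ∀ t, t < 2 * k → ((i : ℕ) ≠ (s + t) % (2 * m))
      · have hiβ : γ i ≠ β i := by rw [hposF i hU] at hi; exact hi
        rw [if_neg (show ¬ (∀ j : Fin (2 * m),
            (∀ t, t < 2 * k → ((j : ℕ) ≠ (s + t) % (2 * m))) → β j = γ j) from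
          fun h => hiβ (h i hU).symm)]
        ring
      · have hiα : γ i ≠ α i := by rw [hnegF i hU] at hi; exact hi
        push_neg at hU
        obtain ⟨t, ht, hit⟩ := hU
        have hia : i ≠ ⟨(s + 2 * k) % (2 * m), Nat.mod_lt _ (by omega)⟩ := by
          intro h
          exact hUa t ht ((congrArg Fin.val h).symm.trans hit)
        have hib : i ≠ ⟨(s + 2 * k + 1) % (2 * m), Nat.mod_lt _ (by omega)⟩ := by
          intro h
          exact hUb t ht ((congrArg Fin.val h).symm.trans hit)
        rw [if_neg (show ¬ (∀ j : Fin (2 * m),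
            j ≠ ⟨(s + 2 * k) % (2 * m), Nat.mod_lt _ (by omega)⟩ →
            j ≠ ⟨(s + 2 * k + 1) % (2 * m), Nat.mod_lt _ (by omega)⟩ → γ j = α j) from
          fun h => hiα (h i hia hib))]
        ring
    · -- value at γ₀
      simp only [Matrix.of_apply, cupcapCyc, cupcapOp]
      rw [if_pos (show ∀ i : Fin (2 * m),
          (∀ t, t < 2 * k → ((i : ℕ) ≠ (s + t) % (2 * m))) → β i = γ₀ i from
        fun i hU => (hposF i hU).symm)]
      rw [hγβ (s + 2 * k) hUa, hγβ (s + 2 * k + 1) hUb]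
      have hdelta : (∀ j : Fin (2 * m),
            j ≠ ⟨(s + 2 * k) % (2 * m), Nat.mod_lt _ (by omega)⟩ →
            j ≠ ⟨(s + 2 * k + 1) % (2 * m), Nat.mod_lt _ (by omega)⟩ → γ₀ j = α j) ↔
          (∀ i : Fin (2 * m),
            (∀ t, t < 2 * (k + 1) → ((i : ℕ) ≠ (s + t) % (2 * m))) → β i = α i) := by
        constructor
        · intro h i hU
          have hia : i ≠ ⟨(s + 2 * k) % (2 * m), Nat.mod_lt _ (by omega)⟩ :=
            fun he => hU (2 * k) (by omega) (by rw [he])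
          have hib : i ≠ ⟨(s + 2 * k + 1) % (2 * m), Nat.mod_lt _ (by omega)⟩ :=
            fun he => hU (2 * k + 1) (by omega)
              (by rw [he]; show (s + 2 * k + 1) % (2 * m) = (s + (2 * k + 1)) % (2 * m)
                  rw [Nat.add_assoc])
          have hUk : ∀ t, t < 2 * k → ((i : ℕ) ≠ (s + t) % (2 * m)) :=
            fun t ht => hU t (by omega)
          rw [← hposF i hUk]
          exact h i hia hib
        · intro h i hia hib
          by_cases hU : ∀ t, t < 2 * k → ((i : ℕ) ≠ (s + t) % (2 * m))
          · have hU' : ∀ t, t < 2 * (k + 1) → ((i : ℕ) ≠ (s + t) % (2 * m)) := by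
              intro t ht
              rcases Nat.lt_or_ge t (2 * k) with h' | h'
              · exact hU t h'
              · intro he
                have ht2 : t = 2 * k ∨ t = 2 * k + 1 := by omega
                rcases ht2 with rfl | rfl
                · exact hia (Fin.ext he)
                · exact hib (Fin.ext he)
            rw [hposF i hU]
            exact h i hU'
          · exact hnegF i hU
      rw [if_congr hdelta rfl rfl, Finset.prod_range_succ]
      rw [show (∏ j ∈ Finset.range k,
          cupcap (q (s + 2 * j))
            (β ⟨(s + 2 * j) % (2 * m), Nat.mod_lt _ (by omega)⟩,
             β ⟨(s + 2 * j + 1) % (2 * m), Nat.mod_lt _ (by omega)⟩)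
            (γ₀ ⟨(s + 2 * j) % (2 * m), Nat.mod_lt _ (by omega)⟩,
             γ₀ ⟨(s + 2 * j + 1) % (2 * m), Nat.mod_lt _ (by omega)⟩)) =
          ∏ j ∈ Finset.range k,
          cupcap (q (s + 2 * j))
            (β ⟨(s + 2 * j) % (2 * m), Nat.mod_lt _ (by omega)⟩,
             β ⟨(s + 2 * j + 1) % (2 * m), Nat.mod_lt _ (by omega)⟩)
            (α ⟨(s + 2 * j) % (2 * m), Nat.mod_lt _ (by omega)⟩,
             α ⟨(s + 2 * j + 1) % (2 * m), Nat.mod_lt _ (by omega)⟩) from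
        Finset.prod_congr rfl fun j hj => by
          rw [Finset.mem_range] at hj
          rw [hγα (s + 2 * j) (by push_neg; exact ⟨2 * j, by omega, rfl⟩),
            hγα (s + 2 * j + 1) (by push_neg; exact ⟨2 * j + 1, by omega, by rw [Nat.add_assoc]⟩)]]
      ring


/-- cup vector -/
def cvec (q : Rˣ) : Fin 2 × Fin 2 → R := fun p =>
  if p = (0, 1) then (q : R) else if p = (1, 0) then 1 else 0

/-- cap vector -/
def rvec (q : Rˣ) : Fin 2 × Fin 2 → R := fun p =>
  if p = (0, 1) then 1 else if p = (1, 0) then ((q⁻¹ : Rˣ) : R) else 0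

lemma cupcap_eq (q : Rˣ) (p p' : Fin 2 × Fin 2) :
    cupcap (R := R) q p p' = cvec q p * rvec q p' := by
  obtain ⟨a, b⟩ := p
  obtain ⟨c, d⟩ := p'
  fin_cases a <;> fin_cases b <;> fin_cases c <;> fin_cases d <;>
    simp [cupcap, cvec, rvec, Prod.ext_iff]

lemma cvec_diag (q : Rˣ) (a b : Fin 2) (h : a = b) : cvec (R := R) q (a, b) = 0 := by
  subst h; fin_cases a <;> simp [cvec, Prod.ext_iff, Fin.ext_iff]

lemma rvec_diag (q : Rˣ) (a b : Fin 2) (h : a = b) : rvec (R := R) q (a, b) = 0 := by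
  subst h; fin_cases a <;> simp [rvec, Prod.ext_iff, Fin.ext_iff]

/-- the full cup vector for the product of cup-caps starting at offset `s` -/
def cvProd (m : ℕ) (hm : 1 ≤ m) (q : ℕ → Rˣ) (s : ℕ) : (Fin (2 * m) → Fin 2) → R :=
  fun β => ∏ j ∈ Finset.range m,
    cvec (q (s + 2 * j))
      (β ⟨(s + 2 * j) % (2 * m), Nat.mod_lt _ (by omega)⟩,
       β ⟨(s + 2 * j + 1) % (2 * m), Nat.mod_lt _ (by omega)⟩)

/-- the full cap vector -/
def rvProd (m : ℕ) (hm : 1 ≤ m) (q : ℕ → Rˣ) (s : ℕ) : (Fin (2 * m) → Fin 2) → R :=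
  fun α => ∏ j ∈ Finset.range m,
    rvec (q (s + 2 * j))
      (α ⟨(s + 2 * j) % (2 * m), Nat.mod_lt _ (by omega)⟩,
       α ⟨(s + 2 * j + 1) % (2 * m), Nat.mod_lt _ (by omega)⟩)

lemma prod_formula_full (m : ℕ) (hm : 1 ≤ m) (q : ℕ → Rˣ) (s : ℕ) (hs : s < 2 * m) :
    ((List.range m).map fun j =>
        cupcapCyc (R := R) (n := 2 * m) (by omega) (q (s + 2 * j)) (s + 2 * j)).prod =
    Matrix.vecMulVec (cvProd m hm q s) (rvProd m hm q s) := by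
  rw [prod_formula m hm q s m le_rfl]
  ext β α
  rw [Matrix.of_apply, Matrix.vecMulVec_apply]
  have hcond : ∀ i : Fin (2 * m),
      (∀ t, t < 2 * m → ((i : ℕ) ≠ (s + t) % (2 * m))) → β i = α i := by
    intro i hi
    exfalso
    rcases le_or_gt s (i : ℕ) with h | h
    · refine hi ((i : ℕ) - s) (by omega) ?_
      have he : s + ((i : ℕ) - s) = (i : ℕ) := by omega
      rw [he, Nat.mod_eq_of_lt i.isLt]
    · refine hi ((i : ℕ) + 2 * m - s) (by omega) ?_
      have he : s + ((i : ℕ) + 2 * m - s) = (i : ℕ) + 2 * m := by omega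
      rw [he, Nat.add_mod_right, Nat.mod_eq_of_lt i.isLt]
  rw [if_pos hcond, one_mul]
  rw [show cvProd m hm q s β * rvProd m hm q s α =
      ∏ j ∈ Finset.range m,
        (cvec (q (s + 2 * j))
          (β ⟨(s + 2 * j) % (2 * m), Nat.mod_lt _ (by omega)⟩,
           β ⟨(s + 2 * j + 1) % (2 * m), Nat.mod_lt _ (by omega)⟩) *
         rvec (q (s + 2 * j))
          (α ⟨(s + 2 * j) % (2 * m), Nat.mod_lt _ (by omega)⟩,
           α ⟨(s + 2 * j + 1) % (2 * m), Nat.mod_lt _ (by omega)⟩)) from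
    (Finset.prod_mul_distrib).symm]
  exact Finset.prod_congr rfl fun j _ => cupcap_eq _ _ _


/-- alternating basis sequence starting with parity `c` -/
def altF (m : ℕ) (c : ℕ) : Fin (2 * m) → Fin 2 :=
  fun i => ⟨(c + (i : ℕ)) % 2, Nat.mod_lt _ (by omega)⟩

lemma altF_even (m c x : ℕ) (h : x % (2 * m) < 2 * m) (h2 : (c + x) % 2 = 0) :
    altF m c ⟨x % (2 * m), h⟩ = 0 := by
  apply Fin.ext
  simp only [altF, Fin.val_zero]
  rw [Nat.add_mod, Nat.mod_mod_of_dvd x ⟨m, rfl⟩, ← Nat.add_mod, h2]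

lemma altF_odd (m c x : ℕ) (h : x % (2 * m) < 2 * m) (h2 : (c + x) % 2 = 1) :
    altF m c ⟨x % (2 * m), h⟩ = 1 := by
  apply Fin.ext
  simp only [altF, Fin.val_one]
  rw [Nat.add_mod, Nat.mod_mod_of_dvd x ⟨m, rfl⟩, ← Nat.add_mod, h2]

lemma eq_altF (m : ℕ) (hm : 1 ≤ m) (α : Fin (2 * m) → Fin 2)
    (h : ∀ i, (hi : i < 2 * m) →
      α ⟨i, hi⟩ ≠ α ⟨(i + 1) % (2 * m), Nat.mod_lt _ (by omega)⟩) :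
    α = altF m 0 ∨ α = altF m 1 := by
  have h0lt : 0 < 2 * m := by omega
  have key : ∀ i, (hi : i < 2 * m) →
      (α ⟨i, hi⟩ : ℕ) = ((α ⟨0, h0lt⟩ : ℕ) + i) % 2 := by
    intro i
    induction i with
    | zero =>
      intro hi
      have : (α ⟨0, h0lt⟩ : ℕ) < 2 := Fin.is_lt _
      omega
    | succ i ih =>
      intro hi
      have hi' : i < 2 * m := by omega
      have h1 := h i hi'
      have e : (⟨(i + 1) % (2 * m), Nat.mod_lt _ (by omega)⟩ : Fin (2 * m)) = ⟨i + 1, hi⟩ :=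
        Fin.ext (Nat.mod_eq_of_lt hi)
      have h1' : α ⟨i, hi'⟩ ≠ α ⟨i + 1, hi⟩ := fun hc => h1 (by rw [e]; exact hc)
      have v0 : (α ⟨0, h0lt⟩ : ℕ) < 2 := Fin.is_lt _
      have v1 : (α ⟨i + 1, hi⟩ : ℕ) < 2 := Fin.is_lt _
      have v2 : (α ⟨i, hi'⟩ : ℕ) < 2 := Fin.is_lt _
      have hne : (α ⟨i, hi'⟩ : ℕ) ≠ (α ⟨i + 1, hi⟩ : ℕ) := fun hv => h1' (Fin.ext hv)
      have h2 := ih hi'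
      omega
  have keyF : ∀ i : Fin (2 * m), (α i : ℕ) = ((α ⟨0, h0lt⟩ : ℕ) + (i : ℕ)) % 2 := by
    intro i
    have := key (i : ℕ) i.isLt
    rwa [Fin.eta] at this
  have v0 : (α ⟨0, h0lt⟩ : ℕ) < 2 := Fin.is_lt _
  have h0 : (α ⟨0, h0lt⟩ : ℕ) = 0 ∨ (α ⟨0, h0lt⟩ : ℕ) = 1 := by omega
  rcases h0 with h0 | h0
  · left
    funext i
    apply Fin.ext
    rw [keyF i, h0]
    rfl
  · right
    funext i
    apply Fin.ext
    rw [keyF i, h0]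
    rfl

lemma altF_ne (m : ℕ) (hm : 1 ≤ m) : altF m 0 ≠ altF m 1 := by
  intro h
  have := congrFun h ⟨0, by omega⟩
  simp only [altF, Fin.mk.injEq] at this
  omega

lemma rvProd_eq_zero (m : ℕ) (hm : 1 ≤ m) (q : ℕ → Rˣ) (s : ℕ)
    (α : Fin (2 * m) → Fin 2) (j : ℕ) (hj : j < m)
    (hfac : α ⟨(s + 2 * j) % (2 * m), Nat.mod_lt _ (by omega)⟩ =
            α ⟨(s + 2 * j + 1) % (2 * m), Nat.mod_lt _ (by omega)⟩) :
    rvProd m hm q s α = 0 :=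
  Finset.prod_eq_zero (Finset.mem_range.mpr hj) (rvec_diag _ _ _ hfac)

lemma cvProd_eq_zero (m : ℕ) (hm : 1 ≤ m) (q : ℕ → Rˣ) (s : ℕ)
    (α : Fin (2 * m) → Fin 2) (j : ℕ) (hj : j < m)
    (hfac : α ⟨(s + 2 * j) % (2 * m), Nat.mod_lt _ (by omega)⟩ =
            α ⟨(s + 2 * j + 1) % (2 * m), Nat.mod_lt _ (by omega)⟩) :
    cvProd m hm q s α = 0 :=
  Finset.prod_eq_zero (Finset.mem_range.mpr hj) (cvec_diag _ _ _ hfac)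

lemma rvProd_alt_one (m : ℕ) (hm : 1 ≤ m) (q : ℕ → Rˣ) (s c : ℕ) (h : (c + s) % 2 = 0) :
    rvProd m hm q s (altF m c) = 1 := by
  refine Finset.prod_eq_one fun j _ => ?_
  rw [altF_even m c (s + 2 * j) _ (by omega), altF_odd m c (s + 2 * j + 1) _ (by omega)]
  simp [rvec]

lemma rvProd_alt_inv (m : ℕ) (hm : 1 ≤ m) (q : ℕ → Rˣ) (s c : ℕ) (h : (c + s) % 2 = 1) :
    rvProd m hm q s (altF m c) = ∏ j ∈ Finset.range m, (((q (s + 2 * j))⁻¹ : Rˣ) : R) := by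
  refine Finset.prod_congr rfl fun j _ => ?_
  rw [altF_odd m c (s + 2 * j) _ (by omega), altF_even m c (s + 2 * j + 1) _ (by omega)]
  simp [rvec, Prod.ext_iff, Fin.ext_iff]

lemma cvProd_alt_q (m : ℕ) (hm : 1 ≤ m) (q : ℕ → Rˣ) (s c : ℕ) (h : (c + s) % 2 = 0) :
    cvProd m hm q s (altF m c) = ∏ j ∈ Finset.range m, ((q (s + 2 * j) : Rˣ) : R) := by
  refine Finset.prod_congr rfl fun j _ => ?_
  rw [altF_even m c (s + 2 * j) _ (by omega), altF_odd m c (s + 2 * j + 1) _ (by omega)]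
  simp [cvec]

lemma cvProd_alt_one (m : ℕ) (hm : 1 ≤ m) (q : ℕ → Rˣ) (s c : ℕ) (h : (c + s) % 2 = 1) :
    cvProd m hm q s (altF m c) = 1 := by
  refine Finset.prod_eq_one fun j _ => ?_
  rw [altF_odd m c (s + 2 * j) _ (by omega), altF_even m c (s + 2 * j + 1) _ (by omega)]
  simp [cvec, Prod.ext_iff, Fin.ext_iff]


lemma not_alt_vanish (m : ℕ) (hm : 1 ≤ m) (q : ℕ → Rˣ) (s0 s1 : ℕ)
    (hs : s0 = 0 ∧ s1 = 1 ∨ s0 = 1 ∧ s1 = 0)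
    (α : Fin (2 * m) → Fin 2)
    (hα : α ∉ ({altF m 0, altF m 1} : Finset (Fin (2 * m) → Fin 2))) :
    rvProd m hm q s0 α * cvProd m hm q s1 α = 0 := by
  have hno : ¬(α = altF m 0 ∨ α = altF m 1) := by
    simpa [Finset.mem_insert, Finset.mem_singleton] using hα
  have hex : ∃ i, ∃ hi : i < 2 * m,
      α ⟨i, hi⟩ = α ⟨(i + 1) % (2 * m), Nat.mod_lt _ (by omega)⟩ := by
    by_contra hc
    push_neg at hc
    exact hno (eq_altF m hm α hc)
  obtain ⟨i, hi, heq⟩ := hex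
  -- generic: if i = s + 2j for some j < m then the `s`-indexed product vanishes at j.
  have main : ∀ (s j : ℕ), j < m → i = s + 2 * j →
      α ⟨(s + 2 * j) % (2 * m), Nat.mod_lt _ (by omega)⟩ =
      α ⟨(s + 2 * j + 1) % (2 * m), Nat.mod_lt _ (by omega)⟩ := by
    intro s j hjm hij
    have e1 : (⟨(s + 2 * j) % (2 * m), Nat.mod_lt _ (by omega)⟩ : Fin (2 * m)) = ⟨i, hi⟩ :=
      Fin.ext (show (s + 2 * j) % (2 * m) = i by rw [Nat.mod_eq_of_lt (by omega)]; omega)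
    have e2 : (⟨(s + 2 * j + 1) % (2 * m), Nat.mod_lt _ (by omega)⟩ : Fin (2 * m)) =
        ⟨(i + 1) % (2 * m), Nat.mod_lt _ (by omega)⟩ :=
      Fin.ext (show (s + 2 * j + 1) % (2 * m) = (i + 1) % (2 * m) by
        rw [show s + 2 * j + 1 = i + 1 by omega])
    rw [e1, e2]
    exact heq
  rcases hs with ⟨rfl, rfl⟩ | ⟨rfl, rfl⟩
  · rcases Nat.even_or_odd i with he | ho
    · obtain ⟨j, hj⟩ := he
      rw [rvProd_eq_zero m hm q 0 α j (by omega) (main 0 j (by omega) (by omega)), zero_mul]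
    · obtain ⟨j, hj⟩ := ho
      rw [cvProd_eq_zero m hm q 1 α j (by omega) (main 1 j (by omega) (by omega)), mul_zero]
  · rcases Nat.even_or_odd i with he | ho
    · obtain ⟨j, hj⟩ := he
      rw [cvProd_eq_zero m hm q 0 α j (by omega) (main 0 j (by omega) (by omega)), mul_zero]
    · obtain ⟨j, hj⟩ := ho
      rw [rvProd_eq_zero m hm q 1 α j (by omega) (main 1 j (by omega) (by omega)), zero_mul]

lemma coe_inv_prod (m : ℕ) (q : ℕ → Rˣ) (s : ℕ) :
    (∏ j ∈ Finset.range m, (((q (s + 2 * j))⁻¹ : Rˣ) : R)) =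
    (((∏ j ∈ Finset.range m, q (s + 2 * j))⁻¹ : Rˣ) : R) := by
  rw [← Finset.prod_inv_distrib, Units.coe_prod]

lemma dot01 (m : ℕ) (hm : 1 ≤ m) (q : ℕ → Rˣ) :
    (∑ α : Fin (2 * m) → Fin 2, rvProd m hm q 0 α * cvProd m hm q 1 α) =
    1 + ((((∏ j ∈ Finset.range m, q (1 + 2 * j)) *
      (∏ j ∈ Finset.range m, q (0 + 2 * j))⁻¹ : Rˣ)) : R) := by
  rw [← Finset.sum_subset
      (Finset.subset_univ ({altF m 0, altF m 1} : Finset (Fin (2 * m) → Fin 2)))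
      (fun α _ hα => not_alt_vanish m hm q 0 1 (Or.inl ⟨rfl, rfl⟩) α hα),
    Finset.sum_pair (altF_ne m hm)]
  rw [rvProd_alt_one m hm q 0 0 (by omega), cvProd_alt_one m hm q 1 0 (by omega),
    rvProd_alt_inv m hm q 0 1 (by omega), cvProd_alt_q m hm q 1 1 (by omega)]
  rw [coe_inv_prod m q 0, Units.val_mul, Units.coe_prod]
  ring

lemma dot10 (m : ℕ) (hm : 1 ≤ m) (q : ℕ → Rˣ) :
    (∑ α : Fin (2 * m) → Fin 2, rvProd m hm q 1 α * cvProd m hm q 0 α) =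
    1 + ((((∏ j ∈ Finset.range m, q (0 + 2 * j)) *
      (∏ j ∈ Finset.range m, q (1 + 2 * j))⁻¹ : Rˣ)) : R) := by
  rw [← Finset.sum_subset
      (Finset.subset_univ ({altF m 0, altF m 1} : Finset (Fin (2 * m) → Fin 2)))
      (fun α _ hα => not_alt_vanish m hm q 1 0 (Or.inr ⟨rfl, rfl⟩) α hα),
    Finset.sum_pair (altF_ne m hm)]
  rw [rvProd_alt_inv m hm q 1 0 (by omega), cvProd_alt_q m hm q 0 0 (by omega),
    rvProd_alt_one m hm q 1 1 (by omega), cvProd_alt_one m hm q 0 1 (by omega)]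
  rw [coe_inv_prod m q 1, Units.val_mul, Units.coe_prod]
  ring

lemma vecMulVec_mul_vecMulVec (n : ℕ) (u v w x : (Fin n → Fin 2) → R) :
    Matrix.vecMulVec u v * Matrix.vecMulVec w x =
      (∑ γ : Fin n → Fin 2, v γ * w γ) • Matrix.vecMulVec u x := by
  ext i j
  rw [Matrix.mul_apply, Matrix.smul_apply, smul_eq_mul, Matrix.vecMulVec_apply,
    Finset.sum_mul]
  refine Finset.sum_congr rfl fun γ _ => ?_
  rw [Matrix.vecMulVec_apply, Matrix.vecMulVec_apply]
  ring

end Aux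

/-- Lemma 2.6: `𝒪ℰ𝒪 = Q𝒪` and `ℰ𝒪ℰ = Qℰ`, where
`Q = (q₁q₃⋯q_{2m-1})/(q₂q₄⋯q_{2m}) + 2 + (q₂q₄⋯q_{2m})/(q₁q₃⋯q_{2m-1})`. -/
theorem periodic_identity {R : Type*} [CommRing R] (m : ℕ) (hm : 1 ≤ m) (q : ℕ → Rˣ) :
    (oddProd m hm q * evenProd m hm q * oddProd m hm q =
      (((∏ j ∈ Finset.range m, q (2 * j)) * (∏ j ∈ Finset.range m, q (2 * j + 1))⁻¹ : Rˣ) +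
        2 +
       ((∏ j ∈ Finset.range m, q (2 * j + 1)) * (∏ j ∈ Finset.range m, q (2 * j))⁻¹ : Rˣ)
        : R) • oddProd m hm q) ∧
    (evenProd m hm q * oddProd m hm q * evenProd m hm q =
      (((∏ j ∈ Finset.range m, q (2 * j)) * (∏ j ∈ Finset.range m, q (2 * j + 1))⁻¹ : Rˣ) +
        2 +
       ((∏ j ∈ Finset.range m, q (2 * j + 1)) * (∏ j ∈ Finset.range m, q (2 * j))⁻¹ : Rˣ)
        : R) • evenProd m hm q) := by
  have hO : oddProd m hm q = Matrix.vecMulVec (cvProd m hm q 0) (rvProd m hm q 0) := by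
    have h := prod_formula_full (R := R) m hm q 0 (by omega)
    simp only [Nat.zero_add] at h
    exact h
  have hE : evenProd m hm q = Matrix.vecMulVec (cvProd m hm q 1) (rvProd m hm q 1) := by
    have h := prod_formula_full (R := R) m hm q 1 (by omega)
    simp only [Nat.add_comm 1] at h
    exact h
  have h1 := dot01 m hm q
  have h2 := dot10 m hm q
  simp only [Nat.zero_add] at h1 h2
  simp only [Nat.add_comm 1] at h1 h2
  set A := ∏ j ∈ Finset.range m, q (2 * j) with hA
  set B := ∏ j ∈ Finset.range m, q (2 * j + 1) with hB
  have hQ : (1 + ((B * A⁻¹ : Rˣ) : R)) * (1 + ((A * B⁻¹ : Rˣ) : R)) =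
      ((A * B⁻¹ : Rˣ) : R) + 2 + ((B * A⁻¹ : Rˣ) : R) := by
    have hu : ((B * A⁻¹ : Rˣ) : R) * ((A * B⁻¹ : Rˣ) : R) = 1 := by
      rw [← Units.val_mul, show (B * A⁻¹) * (A * B⁻¹) = 1 by group, Units.val_one]
    linear_combination hu
  constructor
  · rw [hO, hE, vecMulVec_mul_vecMulVec, smul_mul_assoc, vecMulVec_mul_vecMulVec,
      smul_smul, h1, h2, hQ, ← hO]
  · rw [hE, hO, vecMulVec_mul_vecMulVec, smul_mul_assoc, vecMulVec_mul_vecMulVec,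
      smul_smul, h2, h1,
      show (1 + ((A * B⁻¹ : Rˣ) : R)) * (1 + ((B * A⁻¹ : Rˣ) : R)) =
        ((A * B⁻¹ : Rˣ) : R) + 2 + ((B * A⁻¹ : Rˣ) : R) from by rw [mul_comm]; exact hQ,
      ← hE]
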